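/- (Bisector avoidance near a cusp.) Let p ∈ V be a future-pointing null vector and let 0 < c < d be real numbers. Let y ∈ H with B(y,p) = c, and let K be a compact subset of the horosphere {x ∈ H : B(x,p) = c} with y ∈ K. Let D_p = H ∩ cone({p} ∪ K), where cone(S) denotes the set of all nonnegative finite linear combinations of elements of S (so D_p is the hyperbolic convex hull of p and K). Then there exists a real number a with 0 < a < c such that for every z ∈ H with B(z,p) > d and every x ∈ D_p with B(x,p) ≤ a, one has B(x,y) ≠ B(x,z); that is, the hyperplane of points equidistant from y and z does not meet D_p ∩ aU_p. -/

import Mathlib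

/-- The Minkowski bilinear form of signature `(1,n)` on `ℝ^{n+1}`:
`B x y = x₀ y₀ - ∑_{i=1}^n xᵢ yᵢ`. -/
def B (n : ℕ) (x y : Fin (n + 1) → ℝ) : ℝ :=
  x 0 * y 0 - ∑ i : Fin n, x i.succ * y i.succ

/-- The hyperboloid model `H = {x : B(x,x) = 1, x₀ > 0}` of hyperbolic `n`-space. -/
def hyperboloid (n : ℕ) : Set (Fin (n + 1) → ℝ) := {x | B n x x = 1 ∧ 0 < x 0}

/-- The cone on a set `S ⊆ V`: all nonnegative finite linear combinations of
elements of `S`. -/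
def coneOf (n : ℕ) (S : Set (Fin (n + 1) → ℝ)) : Set (Fin (n + 1) → ℝ) :=
  {x | ∃ (t : Finset (Fin (n + 1) → ℝ)) (c : (Fin (n + 1) → ℝ) → ℝ),
    ↑t ⊆ S ∧ (∀ v, 0 ≤ c v) ∧ x = ∑ v ∈ t, c v • v}

/-!
Write `x ∈ D_p` as `x = s • p + w` with `s ≥ 0` and `w` in the cone on `K`, and let
`β = B(x,p) = B(w,p)`. If `M` bounds `B` on `K × K`, then testing against the constant
`B(·,p) = c` on `K` gives `c B(w,y) ≤ M β`, `β ≤ c B(w,z)` (as `B ≥ 1` on `H`) and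
`c² B(w,w) ≤ M β²`. If `B(x,y) = B(x,z)`, then `B(p,y) = c` and `B(p,z) > d` force
`s c (d - c) ≤ (M - 1) β`, and inserting this into `1 = B(x,x) = 2 s β + B(w,w)` yields
`(d - c) c² ≤ (2c(M - 1) + (d - c) M) β²`, which fails as soon as `β ≤ a` for `a` small.
-/

open Filter Topology

section Minkowski

variable {n : ℕ}

lemma B_comm (x y : Fin (n + 1) → ℝ) : B n x y = B n y x := by
  simp only [B, mul_comm]

lemma B_add_left (x x' y : Fin (n + 1) → ℝ) : B n (x + x') y = B n x y + B n x' y := by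
  simp only [B, Pi.add_apply, add_mul, Finset.sum_add_distrib]
  ring

lemma B_add_right (x y y' : Fin (n + 1) → ℝ) : B n x (y + y') = B n x y + B n x y' := by
  rw [B_comm, B_add_left, B_comm y, B_comm y']

lemma B_smul_left (r : ℝ) (x y : Fin (n + 1) → ℝ) : B n (r • x) y = r * B n x y := by
  simp only [B, Pi.smul_apply, smul_eq_mul, Finset.mul_sum, mul_sub, mul_assoc]

lemma B_smul_right (r : ℝ) (x y : Fin (n + 1) → ℝ) : B n x (r • y) = r * B n x y := by
  rw [B_comm, B_smul_left, B_comm]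

lemma B_zero_right (x : Fin (n + 1) → ℝ) : B n x 0 = 0 := by
  simpa using B_smul_right 0 x 0

lemma B_sum_left {ι : Type*} (t : Finset ι) (f : ι → Fin (n + 1) → ℝ)
    (y : Fin (n + 1) → ℝ) :
    B n (∑ i ∈ t, f i) y = ∑ i ∈ t, B n (f i) y := by
  classical
  induction t using Finset.induction_on with
  | empty => simp [B]
  | insert i t hi ih => rw [Finset.sum_insert hi, Finset.sum_insert hi, B_add_left, ih]

lemma continuous_B :
    Continuous fun q : (Fin (n + 1) → ℝ) × (Fin (n + 1) → ℝ) => B n q.1 q.2 := by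
  unfold B
  fun_prop

lemma one_le_B_of_mem_hyperboloid {x y : Fin (n + 1) → ℝ}
    (hx : x ∈ hyperboloid n) (hy : y ∈ hyperboloid n) : 1 ≤ B n x y := by
  obtain ⟨hxx, hx0⟩ := hx
  obtain ⟨hyy, hy0⟩ := hy
  set U := ∑ i : Fin n, x i.succ * x i.succ
  set V := ∑ i : Fin n, y i.succ * y i.succ
  set S := ∑ i : Fin n, x i.succ * y i.succ
  have hU : 0 ≤ U := Finset.sum_nonneg fun i _ => mul_self_nonneg _
  have hV : 0 ≤ V := Finset.sum_nonneg fun i _ => mul_self_nonneg _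
  have hSUV : S * S ≤ U * V := by
    simpa only [sq] using Finset.sum_mul_sq_le_sq_mul_sq Finset.univ
      (fun i : Fin n => x i.succ) (fun i : Fin n => y i.succ)
  have h2S : 2 * S ≤ U + V := by nlinarith [sq_nonneg (U - V), sq_nonneg (U + V - 2 * S)]
  change x 0 * x 0 - U = 1 at hxx
  change y 0 * y 0 - V = 1 at hyy
  change 1 ≤ x 0 * y 0 - S
  -- `(x₀ y₀)² = (1 + U) (1 + V) ≥ (1 + S)²` by Cauchy–Schwarz for the spatial parts
  nlinarith [mul_pos hx0 hy0, sq_nonneg (x 0 * y 0 - (1 + S))]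

lemma exists_eq_smul_add_of_mem_coneOf_insert {p x : Fin (n + 1) → ℝ}
    {S : Set (Fin (n + 1) → ℝ)} (hx : x ∈ coneOf n (insert p S)) :
    ∃ s : ℝ, 0 ≤ s ∧ ∃ w ∈ coneOf n S, x = s • p + w := by
  classical
  obtain ⟨t, co, hts, hco, rfl⟩ := hx
  refine ⟨if p ∈ t then co p else 0, by split_ifs <;> simp [hco],
    ∑ v ∈ t.erase p, co v • v, ⟨t.erase p, co, fun v hv => ?_, hco, rfl⟩, ?_⟩
  · obtain ⟨hvp, hvt⟩ := Finset.mem_erase.mp hv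
    exact (hts hvt).resolve_left hvp
  · split_ifs with hpt
    · exact (Finset.add_sum_erase t _ hpt).symm
    · simp [Finset.erase_eq_of_notMem hpt]

lemma B_le_B_of_mem_coneOf {S : Set (Fin (n + 1) → ℝ)} {u u' w : Fin (n + 1) → ℝ}
    (h : ∀ v ∈ S, B n v u ≤ B n v u') (hw : w ∈ coneOf n S) : B n w u ≤ B n w u' := by
  obtain ⟨t, co, hts, hco, rfl⟩ := hw
  simp only [B_sum_left, B_smul_left]
  exact Finset.sum_le_sum fun v hv => mul_le_mul_of_nonneg_left (h v (hts hv)) (hco v)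

end Minkowski

section Horosphere

variable {n : ℕ} {p u w : Fin (n + 1) → ℝ} {c M : ℝ} {K : Set (Fin (n + 1) → ℝ)}

lemma mul_B_le_of_mem_coneOf (hKp : ∀ v ∈ K, B n v p = c) (hc : 0 ≤ c)
    (hu : ∀ v ∈ K, B n v u ≤ M) (hw : w ∈ coneOf n K) : c * B n w u ≤ M * B n w p := by
  rw [← B_smul_right, ← B_smul_right]
  refine B_le_B_of_mem_coneOf (fun v hv => ?_) hw
  rw [B_smul_right, B_smul_right, hKp v hv, mul_comm M]
  exact mul_le_mul_of_nonneg_left (hu v hv) hc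

lemma le_mul_B_of_mem_coneOf (hKp : ∀ v ∈ K, B n v p = c) (hc : 0 ≤ c)
    (hu : ∀ v ∈ K, M ≤ B n v u) (hw : w ∈ coneOf n K) : M * B n w p ≤ c * B n w u := by
  rw [← B_smul_right, ← B_smul_right]
  refine B_le_B_of_mem_coneOf (fun v hv => ?_) hw
  rw [B_smul_right, B_smul_right, hKp v hv, mul_comm M]
  exact mul_le_mul_of_nonneg_left (hu v hv) hc

lemma sq_mul_B_self_le_of_mem_coneOf (hKp : ∀ v ∈ K, B n v p = c) (hc : 0 ≤ c)
    (hM : ∀ u ∈ K, ∀ v ∈ K, B n u v ≤ M) (hw : w ∈ coneOf n K) :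
    c ^ 2 * B n w w ≤ M * B n w p ^ 2 := by
  have hKw : ∀ v ∈ K, B n v (c • w) ≤ M * B n w p := fun v hv => by
    rw [B_smul_right, B_comm]
    exact mul_B_le_of_mem_coneOf hKp hc (fun u hu => hM u hu v hv) hw
  have := mul_B_le_of_mem_coneOf hKp hc hKw hw
  rw [B_smul_right] at this
  linarith

lemma B_nonneg_of_mem_coneOf (hKp : ∀ v ∈ K, B n v p = c) (hc : 0 ≤ c)
    (hw : w ∈ coneOf n K) : 0 ≤ B n w p := by
  rw [← B_zero_right w]
  exact B_le_B_of_mem_coneOf (fun v hv => by rw [B_zero_right, hKp v hv]; exact hc) hw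

end Horosphere

lemma B_ne_B_of_mem_coneOf_insert {n : ℕ} {p x y z : Fin (n + 1) → ℝ} {c d M a : ℝ}
    {K : Set (Fin (n + 1) → ℝ)} (hp : B n p p = 0) (hc : 0 < c) (hcd : c < d)
    (hK : K ⊆ {x ∈ hyperboloid n | B n x p = c}) (hM : ∀ u ∈ K, ∀ v ∈ K, B n u v ≤ M)
    (hyK : y ∈ K) (ha : (2 * c * (M - 1) + (d - c) * M) * a ^ 2 < (d - c) * c ^ 2)
    (hz : z ∈ hyperboloid n) (hzp : d < B n z p)
    (hx : x ∈ hyperboloid n ∩ coneOf n ({p} ∪ K)) (hxa : B n x p ≤ a) :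
    B n x y ≠ B n x z := by
  obtain ⟨hxH, hxK⟩ := hx
  rw [Set.singleton_union] at hxK
  obtain ⟨s, hs, w, hw, rfl⟩ := exists_eq_smul_add_of_mem_coneOf_insert hxK
  have hKp : ∀ v ∈ K, B n v p = c := fun v hv => (hK hv).2
  have hwy := mul_B_le_of_mem_coneOf hKp hc.le (fun v hv => hM v hv y hyK) hw
  have hwz := le_mul_B_of_mem_coneOf hKp hc.le
    (fun v hv => one_le_B_of_mem_hyperboloid (hK hv).1 hz) hw
  have hww := sq_mul_B_self_le_of_mem_coneOf hKp hc.le hM hw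
  have hwp := B_nonneg_of_mem_coneOf hKp hc.le hw
  have hM1 : 1 ≤ M := (hK hyK).1.1 ▸ hM y hyK y hyK
  have hxx := hxH.1
  simp only [B_add_left, B_add_right, B_smul_left, B_smul_right, hp, B_comm p, hKp y hyK,
    mul_zero, zero_add] at hxx hxa ⊢
  set β := B n w p
  intro h
  have h1 : s * c * (d - c) ≤ (M - 1) * β := by
    nlinarith [mul_le_mul_of_nonneg_left hzp.le (mul_nonneg hc.le hs), congrArg (c * ·) h]
  have h2 : (d - c) * c ^ 2 ≤ (2 * c * (M - 1) + (d - c) * M) * β ^ 2 := by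
    nlinarith [mul_le_mul_of_nonneg_left h1 (by positivity : 0 ≤ 2 * c * β),
      mul_le_mul_of_nonneg_left hww (sub_nonneg.2 hcd.le), congrArg ((d - c) * c ^ 2 * ·) hxx]
  have hC : 0 ≤ 2 * c * (M - 1) + (d - c) * M := by nlinarith
  nlinarith [mul_le_mul_of_nonneg_left (pow_le_pow_left₀ hwp hxa 2) hC]

theorem bisector_avoidance_general (n : ℕ)
    (p : Fin (n + 1) → ℝ) (hp : B n p p = 0)
    (c d : ℝ) (hc : 0 < c) (hcd : c < d)
    (y : Fin (n + 1) → ℝ)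
    (K : Set (Fin (n + 1) → ℝ))
    (hK : K ⊆ {x ∈ hyperboloid n | B n x p = c})
    (hKcpt : IsCompact K) (hyK : y ∈ K) :
    ∃ a : ℝ, 0 < a ∧ a < c ∧
      ∀ z ∈ hyperboloid n, d < B n z p →
        ∀ x ∈ hyperboloid n ∩ coneOf n ({p} ∪ K),
          B n x p ≤ a → B n x y ≠ B n x z := by
  obtain ⟨M, hM⟩ := (hKcpt.prod hKcpt).bddAbove_image continuous_B.continuousOn
  have hMK : ∀ u ∈ K, ∀ v ∈ K, B n u v ≤ M := fun u hu v hv =>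
    hM ⟨(u, v), ⟨hu, hv⟩, rfl⟩
  set C := 2 * c * (M - 1) + (d - c) * M
  have hsmall : ∀ᶠ a in 𝓝 0, a < c ∧ C * a ^ 2 < (d - c) * c ^ 2 := by
    refine (gt_mem_nhds hc).and ?_
    exact ((continuous_const.mul (continuous_pow 2)).tendsto' 0 0 (by simp)).eventually
      (gt_mem_nhds (by positivity))
  obtain ⟨a, ⟨hac, ha⟩, ha0⟩ := ((hsmall.filter_mono nhdsWithin_le_nhds).and
    (self_mem_nhdsWithin : ∀ᶠ a in 𝓝[>] (0 : ℝ), 0 < a)).exists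
  exact ⟨a, ha0, hac, fun z hz hzd x hx hxa =>
    B_ne_B_of_mem_coneOf_insert hp hc hcd hK hMK hyK ha hz hzd hx hxa⟩

/-- Bisector avoidance near a cusp: for `y` on the horosphere `{B(·,p) = c}` and `K` a
compact piece of that horosphere containing `y`, there is `0 < a < c` such that no point
of the hyperbolic convex hull `D_p` of `p` and `K` lying in the horoball `aU_p` is
equidistant from `y` and from any point `z` outside the horoball `dU_p`. -/
theorem bisector_avoidance (n : ℕ) (hn : 1 ≤ n)
    (p : Fin (n + 1) → ℝ) (hp : B n p p = 0) (hp0 : 0 < p 0)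
    (c d : ℝ) (hc : 0 < c) (hcd : c < d)
    (y : Fin (n + 1) → ℝ) (hy : y ∈ hyperboloid n) (hyp : B n y p = c)
    (K : Set (Fin (n + 1) → ℝ))
    (hK : K ⊆ {x ∈ hyperboloid n | B n x p = c})
    (hKcpt : IsCompact K) (hyK : y ∈ K) :
    ∃ a : ℝ, 0 < a ∧ a < c ∧
      ∀ z ∈ hyperboloid n, d < B n z p →
        ∀ x ∈ hyperboloid n ∩ coneOf n ({p} ∪ K),
          B n x p ≤ a → B n x y ≠ B n x z :=
  bisector_avoidance_general n p hp c d hc hcd y K hK hKcpt hyK
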